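/- Let x be a non-periodic linearly recurrent sequence with constant K and u a factor of x. Then the number of distinct return words to u in x is at most 4K³. -/

import Mathlib

/-!
Two occurrences of `u` at distance `p` with `K (p + 1) ≤ |u|` would make `x` periodic, so
distinct occurrences of `u` are at least `max (|u| / K) 1` apart. A return word starting at an
occurrence `i` has length at most `K |u|`, so it is determined by the factor of length
`(K + 1) |u|` at `i`, and by linear recurrence that factor reappears in every window of length
`K (K + 1) |u|` far enough to the right. Distinct return words thus start at distinct,
well-separated occurrences of `u` in a single such window, and there are at most
`K (K + 1) |u| / max (|u| / K) 1 ≤ 4 K³` of them.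
-/

/-- The factor of the sequence `x` starting at position `i` of length `n`. -/
def seqWord {A : Type*} (x : ℕ → A) (i n : ℕ) : List A :=
  (List.range n).map (fun k => x (i + k))

/-- The word `u` occurs in the sequence `x` at position `i`. -/
def occursAt {A : Type*} (x : ℕ → A) (u : List A) (i : ℕ) : Prop :=
  seqWord x i u.length = u

/-- `u` is a factor of the sequence `x`. -/
def IsFactor {A : Type*} (x : ℕ → A) (u : List A) : Prop :=
  ∃ i, occursAt x u i

/-- `u` is a prefix of the sequence `x`. -/
def IsPrefixSeq {A : Type*} (u : List A) (x : ℕ → A) : Prop :=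
  occursAt x u 0

/-- `x` is uniformly recurrent: every factor occurs in every sufficiently long window. -/
def UnifRec {A : Type*} (x : ℕ → A) : Prop :=
  ∀ u : List A, IsFactor x u → ∃ C, ∀ i, ∃ j, i ≤ j ∧ j < i + C ∧ occursAt x u j

/-- `w` is a return word to `u` in `x`: the factor between two consecutive occurrences of `u`. -/
def IsReturnWord {A : Type*} (x : ℕ → A) (u w : List A) : Prop :=
  ∃ i j, i < j ∧ occursAt x u i ∧ occursAt x u j ∧
    (∀ k, i < k → k < j → ¬ occursAt x u k) ∧ w = seqWord x i (j - i)

/-- Apply a morphism (given on letters) to a word, by concatenation. -/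
def morphApply {I A : Type*} (θ : I → List A) (l : List I) : List A :=
  (l.map θ).flatten

/-- Iterate an endomorphism `σ` of the free monoid `n` times on a word. -/
def morphIter {A : Type*} (σ : A → List A) : ℕ → List A → List A
  | 0, l => l
  | n + 1, l => morphApply σ (morphIter σ n l)

/-- `x` is ultimately periodic. -/
def UltPeriodic {A : Type*} (x : ℕ → A) : Prop :=
  ∃ p > 0, ∃ N, ∀ n ≥ N, x (n + p) = x n

/-- `x` is linearly recurrent with constant `K`: it is uniformly recurrent and two
successive occurrences of any nonempty factor `u` differ by at most `K * |u|`. -/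
def LinRec {A : Type*} (K : ℕ) (x : ℕ → A) : Prop :=
  UnifRec x ∧ ∀ u : List A, u ≠ [] → IsFactor x u →
    ∀ i, occursAt x u i → ∃ j, i < j ∧ j ≤ i + K * u.length ∧ occursAt x u j

/-- `σ` is prolongable on the letter `a`. -/
def Prolongable {A : Type*} (σ : A → List A) (a : A) : Prop :=
  (∃ t, σ a = a :: t ∧ t ≠ []) ∧
    Filter.Tendsto (fun n => (morphIter σ n [a]).length) Filter.atTop Filter.atTop

/-- `σ` is growing: the image of each letter has length tending to infinity. -/
def Growing {A : Type*} (σ : A → List A) : Prop :=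
  ∀ a, Filter.Tendsto (fun n => (morphIter σ n [a]).length) Filter.atTop Filter.atTop

/-- `σ` is primitive: some power sends every letter to a word containing every letter. -/
def Primitive {A : Type*} (σ : A → List A) : Prop :=
  ∃ n > 0, ∀ a b : A, b ∈ morphIter σ n [a]

/-- `x` is the fixed point `σ^∞(a)` of `σ`, prolongable on `a`. -/
def IsFixedPointOf {A : Type*} (σ : A → List A) (a : A) (x : ℕ → A) : Prop :=
  x 0 = a ∧ ∀ n, IsPrefixSeq (morphIter σ n [a]) x

/-- The word `w` belongs to the language of the endomorphism `σ`. -/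
def InLang {A : Type*} (σ : A → List A) (w : List A) : Prop :=
  ∃ a n, w <:+: morphIter σ n [a]

/-- The word `u` occurs at position `i` in the word `w`. -/
def listOccursAt {A : Type*} (w u : List A) (i : ℕ) : Prop :=
  i + u.length ≤ w.length ∧ (w.drop i).take u.length = u

/-- `|σ^k|`: the maximal length of the image of a letter under `σ^k`. -/
def maxLen {A : Type*} [Fintype A] [Nonempty A] (σ : A → List A) (k : ℕ) : ℕ :=
  Finset.univ.sup' Finset.univ_nonempty (fun a => (morphIter σ k [a]).length)

/-- `⟨σ^k⟩`: the minimal length of the image of a letter under `σ^k`. -/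
def minLen {A : Type*} [Fintype A] [Nonempty A] (σ : A → List A) (k : ℕ) : ℕ :=
  Finset.univ.inf' Finset.univ_nonempty (fun a => (morphIter σ k [a]).length)

/-- `(R, θ, z)` is the derived-sequence data of `x` on the prefix `u`: `θ 0, …, θ (R-1)`
enumerate the return words to `u` in order of first appearance in `x`, `z` is the derived
sequence, i.e. the coding of the decomposition of `x` into return words to `u`,
so that `Θ_{x,u}(z) = x`. -/
def IsDerivedSeq {A : Type*} (x : ℕ → A) (u : List A) (R : ℕ)
    (θ : ℕ → List A) (z : ℕ → ℕ) : Prop :=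
  (∀ i < R, IsReturnWord x u (θ i)) ∧
  (∀ w, IsReturnWord x u w → ∃ i < R, θ i = w) ∧
  (∀ i < R, ∀ j < R, i < j →
      sInf {k | occursAt x (θ i) k} < sInf {k | occursAt x (θ j) k}) ∧
  (∀ k, z k < R) ∧
  (∀ n, IsPrefixSeq (morphApply θ (seqWord z 0 n)) x)


theorem Set.finite_and_ncard_le_of_forall_finset {α : Type*} {s : Set α} {N : ℕ}
    (h : ∀ t : Finset α, ↑t ⊆ s → t.card ≤ N) : s.Finite ∧ s.ncard ≤ N := by
  have hfin : s.Finite := by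
    by_contra hinf
    obtain ⟨t, hts, htcard⟩ := Set.Infinite.exists_subset_card_eq hinf (N + 1)
    have := h t hts
    omega
  refine ⟨hfin, ?_⟩
  rw [Set.ncard_eq_toFinset_card _ hfin]
  exact h _ (by simp)

theorem Finset.card_le_of_separated {S : Finset ℕ} {m L c δ : ℕ} (hδ : 0 < δ) (hL : L ≤ c * δ)
    (hS : ∀ s ∈ S, m ≤ s ∧ s < m + L) (hsep : ∀ a ∈ S, ∀ b ∈ S, a < b → δ ≤ b - a) :
    S.card ≤ c := by
  calc S.card ≤ (Finset.range c).card := by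
        refine Finset.card_le_card_of_injOn (fun s => (s - m) / δ) (fun s hs => ?_) ?_
        · have := hS s hs
          simp only [Finset.coe_range, Set.mem_Iio]
          rw [Nat.div_lt_iff_lt_mul hδ]
          omega
        · intro a ha b hb hab
          have hbucket {a b : ℕ} (ha : a ∈ S) (hb : b ∈ S) (hlt : a < b)
              (h : (a - m) / δ = (b - m) / δ) : False := by
            have := hsep a ha b hb hlt
            have := hS a ha
            have := Nat.div_add_mod (a - m) δ
            have := Nat.div_add_mod (b - m) δ
            have := Nat.mod_lt (b - m) hδ
            rw [h] at *
            omega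
          rcases lt_trichotomy a b with hlt | heq | hgt
          · exact (hbucket ha hb hlt hab).elim
          · exact heq
          · exact (hbucket hb ha hgt hab.symm).elim
    _ = c := Finset.card_range c

section Words

variable {A : Type*} {x : ℕ → A}

@[simp]
theorem seqWord_length (x : ℕ → A) (i n : ℕ) : (seqWord x i n).length = n := by
  simp [seqWord]

theorem seqWord_eq_seqWord_iff {i j n : ℕ} :
    seqWord x i n = seqWord x j n ↔ ∀ t < n, x (i + t) = x (j + t) := by
  simp [seqWord, List.map_inj_left]

theorem seqWord_ne_nil {i n : ℕ} (hn : 0 < n) : seqWord x i n ≠ [] := by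
  rw [← List.length_pos_iff, seqWord_length]
  exact hn

theorem occursAt_seqWord_iff {i q n : ℕ} :
    occursAt x (seqWord x i n) q ↔ ∀ t < n, x (q + t) = x (i + t) := by
  rw [occursAt, seqWord_length, seqWord_eq_seqWord_iff]

theorem occursAt_seqWord_self (x : ℕ → A) (i n : ℕ) : occursAt x (seqWord x i n) i :=
  occursAt_seqWord_iff.2 fun _ _ => rfl

theorem occursAt.agree {u : List A} {a b : ℕ} (ha : occursAt x u a) (hb : occursAt x u b) :
    ∀ t < u.length, x (a + t) = x (b + t) :=
  seqWord_eq_seqWord_iff.1 (ha.trans hb.symm)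

theorem occursAt.shift_of_agree {u : List A} {i q d len : ℕ} (h : occursAt x u (i + d))
    (hagree : ∀ t < len, x (q + t) = x (i + t)) (hlen : d + u.length ≤ len) :
    occursAt x u (q + d) := by
  refine Eq.trans (seqWord_eq_seqWord_iff.2 fun t ht => ?_) h
  rw [add_assoc, hagree _ (by omega), add_assoc]

def IsReturnWordAt (x : ℕ → A) (u : List A) (i : ℕ) (w : List A) : Prop :=
  ∃ j, i < j ∧ occursAt x u i ∧ occursAt x u j ∧
    (∀ k, i < k → k < j → ¬ occursAt x u k) ∧ w = seqWord x i (j - i)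

namespace IsReturnWordAt

variable {u w w' : List A} {i : ℕ}

theorem unique (h : IsReturnWordAt x u i w) (h' : IsReturnWordAt x u i w') : w = w' := by
  obtain ⟨j, hij, -, hj, hbet, rfl⟩ := h
  obtain ⟨j', hij', -, hj', hbet', rfl⟩ := h'
  obtain hlt | rfl | hgt := lt_trichotomy j j'
  · exact (hbet' j hij hlt hj).elim
  · rfl
  · exact (hbet j' hij' hgt hj').elim

theorem transfer {q : ℕ} (h : IsReturnWordAt x u i w)
    (hagree : ∀ t < w.length + u.length, x (q + t) = x (i + t)) : IsReturnWordAt x u q w := by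
  obtain ⟨j, hij, hi, hj, hbet, rfl⟩ := h
  simp only [seqWord_length] at hagree
  have hagree' : ∀ t < j - i + u.length, x (i + t) = x (q + t) := fun t ht => (hagree t ht).symm
  refine ⟨q + (j - i), by omega, ?_, ?_, fun k hqk hkj hk => ?_, ?_⟩
  · exact (show occursAt x u (i + 0) from hi).shift_of_agree hagree (by omega)
  · exact (show occursAt x u (i + (j - i)) by rwa [Nat.add_sub_cancel' hij.le]).shift_of_agree
      hagree le_rfl
  · have hk' : occursAt x u (q + (k - q)) := by rwa [Nat.add_sub_cancel' hqk.le]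
    exact hbet (i + (k - q)) (by omega) (by omega) (hk'.shift_of_agree hagree' (by omega))
  · rw [Nat.add_sub_cancel_left, seqWord_eq_seqWord_iff]
    exact fun t ht => hagree' t (by omega)

theorem occursAt (h : IsReturnWordAt x u i w) : occursAt x u i := by
  obtain ⟨_, _, hi, _⟩ := h
  exact hi

end IsReturnWordAt

section LinRec

variable {K : ℕ}

theorem LinRec.one_le (hlr : LinRec K x) : 1 ≤ K := by
  obtain ⟨j, hj, hjK, -⟩ := hlr.2 [x 0] (List.cons_ne_nil _ _) ⟨0, rfl⟩ 0 rfl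
  by_contra hK
  simp only [not_le, Nat.lt_one_iff] at hK
  simp [hK] at hjK
  omega

theorem LinRec.exists_occursAt_window (hlr : LinRec K x) {d : List A} (hd : d ≠ []) {i m : ℕ}
    (hi : occursAt x d i) (him : i ≤ m) :
    ∃ r, m ≤ r ∧ r < m + K * d.length ∧ occursAt x d r := by
  induction m, him using Nat.le_induction with
  | base =>
    have : 0 < K * d.length := Nat.mul_pos hlr.one_le (List.length_pos_iff.2 hd)
    exact ⟨i, le_rfl, by omega, hi⟩
  | succ m _ ih =>
    obtain ⟨r, hmr, hr, hocc⟩ := ih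
    obtain hmr | rfl := hmr.lt_or_eq
    · exact ⟨r, hmr, by omega, hocc⟩
    · obtain ⟨j, hj, hjK, hjocc⟩ := hlr.2 d hd ⟨m, hocc⟩ m hocc
      exact ⟨j, hj, by omega, hjocc⟩

theorem LinRec.length_le_of_isReturnWordAt (hlr : LinRec K x) {u w : List A} (hu : u ≠ [])
    {i : ℕ} (h : IsReturnWordAt x u i w) : w.length ≤ K * u.length := by
  obtain ⟨j, hij, hi, hj, hbet, rfl⟩ := h
  obtain ⟨j', hij', hj'K, hj'⟩ := hlr.2 u hu ⟨i, hi⟩ i hi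
  have : j ≤ j' := not_lt.1 fun hlt => hbet j' hij' hlt hj'
  rw [seqWord_length]
  omega

theorem LinRec.exists_isReturnWordAt_window (hlr : LinRec K x) {u w : List A} (hu : u ≠ [])
    {i m : ℕ} (h : IsReturnWordAt x u i w) (him : i ≤ m) :
    ∃ q, m ≤ q ∧ q < m + K * ((K + 1) * u.length) ∧ IsReturnWordAt x u q w := by
  have hv : seqWord x i ((K + 1) * u.length) ≠ [] :=
    seqWord_ne_nil (Nat.mul_pos (by omega) (List.length_pos_iff.2 hu))
  obtain ⟨q, hmq, hqm, hq⟩ := hlr.exists_occursAt_window hv (occursAt_seqWord_self x i _) him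
  rw [seqWord_length] at hqm
  have hw := hlr.length_le_of_isReturnWordAt hu h
  refine ⟨q, hmq, hqm, h.transfer fun t ht => occursAt_seqWord_iff.1 hq t ?_⟩
  nlinarith

/-- The factor of length `|u| + p` at `a` has period `p`, and since `K (p + 1) ≤ |u|` every
factor of length `p + 1` beyond `a` reappears inside a later occurrence of it. -/
theorem LinRec.ultPeriodic_of_occursAt (hlr : LinRec K x) {u : List A} {a p : ℕ} (hp : 0 < p)
    (ha : occursAt x u a) (hap : occursAt x u (a + p)) (hclose : K * (p + 1) ≤ u.length) :
    UltPeriodic x := by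
  refine ⟨p, hp, 0, fun k _ => ?_⟩
  obtain ⟨q, hkq, -, hq⟩ := hlr.exists_occursAt_window (seqWord_ne_nil (by omega : 0 < u.length + p))
    (occursAt_seqWord_self x a _) (le_max_left a k)
  obtain ⟨r, hqr, hrq, hr⟩ := hlr.exists_occursAt_window (seqWord_ne_nil (by omega : 0 < p + 1))
    (occursAt_seqWord_self x k _) (le_trans (le_max_right a k) hkq)
  rw [seqWord_length] at hrq
  have hv := occursAt_seqWord_iff.1 hq
  have hd := occursAt_seqWord_iff.1 hr
  have hperiod := ha.agree hap
  calc x (k + p) = x (r + p) := (hd p (by omega)).symm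
    _ = x (a + (r - q + p)) := by rw [← hv _ (by omega)]; congr 1; omega
    _ = x (a + p + (r - q)) := by rw [add_right_comm, add_assoc]
    _ = x (a + (r - q)) := (hperiod _ (by omega)).symm
    _ = x r := by rw [← hv _ (by omega)]; congr 1; omega
    _ = x k := by simpa using hd 0 (by omega)

theorem LinRec.le_sub_of_occursAt (hlr : LinRec K x) (hnp : ¬ UltPeriodic x) {u : List A}
    {a b : ℕ} (ha : occursAt x u a) (hb : occursAt x u b) (hab : a < b) :
    max (u.length / K) 1 ≤ b - a := by
  have hclose : u.length < K * (b - a + 1) := not_le.1 fun h =>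
    hnp (hlr.ultPeriodic_of_occursAt (by omega) ha (by rwa [Nat.add_sub_cancel' hab.le]) h)
  have := (Nat.div_lt_iff_lt_mul hlr.one_le).2 (by rwa [mul_comm] at hclose)
  omega

end LinRec

end Words

theorem mul_succ_mul_le_four_mul_pow_mul_max {K n : ℕ} (hK : 1 ≤ K) :
    K * ((K + 1) * n) ≤ 4 * K ^ 3 * max (n / K) 1 := by
  set δ := max (n / K) 1
  have hn : n ≤ 2 * K * δ := by
    have hδ : n / K + 1 ≤ 2 * δ := by
      have := le_max_left (n / K) 1
      have := le_max_right (n / K) 1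
      omega
    calc n ≤ K * (n / K + 1) := (Nat.lt_mul_div_succ n (by omega)).le
      _ ≤ K * (2 * δ) := by gcongr
      _ = 2 * K * δ := by ring
  calc K * ((K + 1) * n) ≤ K * (2 * K * (2 * K * δ)) := by gcongr; omega
    _ = 4 * K ^ 3 * δ := by ring

theorem returnWords_card_bound_general {A : Type*} (x : ℕ → A)
    (K : ℕ) (hlr : LinRec K x) (hnp : ¬ UltPeriodic x)
    (u : List A) (hu : u ≠ []) :
    {w : List A | IsReturnWord x u w}.Finite ∧
    {w : List A | IsReturnWord x u w}.ncard ≤ 4 * K ^ 3 := by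
  classical
  refine Set.finite_and_ncard_le_of_forall_finset fun S hS => ?_
  set L := K * ((K + 1) * u.length)
  have hwindow : ∀ᶠ m in Filter.atTop, ∀ w ∈ S,
      ∃ q, m ≤ q ∧ q < m + L ∧ IsReturnWordAt x u q w := by
    refine (Filter.eventually_all_finset S).2 fun w hw => ?_
    obtain ⟨i, hi⟩ : ∃ i, IsReturnWordAt x u i w := hS hw
    exact Filter.eventually_atTop.2 ⟨i, fun m him => hlr.exists_isReturnWordAt_window hu hi him⟩
  obtain ⟨m, hm⟩ := hwindow.exists
  let occ := (Finset.Ico m (m + L)).filter (occursAt x u)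
  calc S.card ≤ occ.card := by
        refine Finset.card_le_card_of_forall_subsingleton (fun w q => IsReturnWordAt x u q w)
          (fun w hw => ?_) (fun q _ w hw w' hw' => hw.2.unique hw'.2)
        obtain ⟨q, hmq, hqm, hq⟩ := hm w hw
        exact ⟨q, Finset.mem_filter.2 ⟨Finset.mem_Ico.2 ⟨hmq, hqm⟩, hq.occursAt⟩, hq⟩
    _ ≤ 4 * K ^ 3 := by
        refine Finset.card_le_of_separated (m := m) (by omega)
          (mul_succ_mul_le_four_mul_pow_mul_max hlr.one_le) (fun s hs => ?_) fun a ha b hb hab =>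
            hlr.le_sub_of_occursAt hnp (Finset.mem_filter.1 ha).2 (Finset.mem_filter.1 hb).2 hab
        exact Finset.mem_Ico.1 (Finset.mem_filter.1 hs).1

/-- Theorem (Durand–Host–Skau): if `x` is a non-periodic linearly recurrent sequence with
constant `K` and `u` a (non-empty) factor of `x`, then the number of distinct return
words to `u` in `x` is at most `4K³`. -/
theorem returnWords_card_bound {A : Type*} [Fintype A] (x : ℕ → A)
    (K : ℕ) (hlr : LinRec K x) (hnp : ¬ UltPeriodic x)
    (u : List A) (hu : u ≠ []) (huf : IsFactor x u) :
    {w : List A | IsReturnWord x u w}.Finite ∧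
    {w : List A | IsReturnWord x u w}.ncard ≤ 4 * K ^ 3 :=
  returnWords_card_bound_general x K hlr hnp u hu
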